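/- Let G = (V,E) be a connected finite graph and σ: E^{or}(G) → {±1} an unbalanced signature (not gauge/switching equivalent to the trivial one). Then λ₁^σ(G) ≥ 1 / ((diam(G)+1)·|V|). In particular ν(G) ≥ 1/((diam(G)+1)|V|). -/

import Mathlib

open Finset

variable {V : Type*} [Fintype V] {W : Type*} [Fintype W]

open scoped Classical in
noncomputable def magEnergy (G : SimpleGraph V) (σ : V → V → ℂ) (f : V → ℂ) : ℝ :=
  (1/2) * ∑ x : V, ∑ y : V, if G.Adj x y then ‖f x - σ x y * f y‖ ^ 2 else 0

noncomputable def magDenom (f : V → ℂ) : ℝ := ∑ x : V, ‖f x‖ ^ 2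

noncomputable def lambda1 (G : SimpleGraph V) (σ : V → V → ℂ) : ℝ :=
  sInf { r : ℝ | ∃ f : V → ℂ, f ≠ 0 ∧ r = magEnergy G σ f / magDenom f }

def IsMagPotential (G : SimpleGraph V) (σ : V → V → ℂ) : Prop :=
  (∀ x y, G.Adj x y → ‖σ x y‖ = 1) ∧
  (∀ x y, G.Adj x y → σ y x = (σ x y)⁻¹)

noncomputable def magHeight (G : SimpleGraph V) : ℝ :=
  sSup { r : ℝ | ∃ σ : V → V → ℂ, IsMagPotential G σ ∧ r = lambda1 G σ }

open scoped Classical in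
noncomputable def magLap (G : SimpleGraph V) (σ : V → V → ℂ) (f : V → ℂ) : V → ℂ :=
  fun x => ∑ y : V, if G.Adj x y then f x - σ x y * f y else 0

/-!
Let `x` maximise `‖f‖`. Reading a switching function off geodesics to `x`, unbalancedness yields
an edge `ab` on which it fails, hence a closed walk through `x` of length at most `2 diam + 1`,
holonomy `-1`, and no repeated dart. Telescoping `f` around it gives
`2 ‖f x‖ ≤ ∑ ‖f u - σ u v f v‖` over its darts, so Cauchy–Schwarz gives
`4 ‖f x‖² ≤ (2 diam + 1) · 2 E(f)`, while `∑ ‖f‖² ≤ |V| ‖f x‖²`.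
-/

open SimpleGraph

theorem List.sq_sum_le_length_mul_sum_sq (l : List ℝ) :
    l.sum ^ 2 ≤ l.length * (l.map (· ^ 2)).sum := by
  have h := sq_sum_le_card_mul_sum_sq (s := Finset.univ) (f := fun i : Fin l.length => l[i.1])
  rwa [Finset.card_univ, Fintype.card_fin, Fin.sum_univ_getElem,
    Fin.sum_univ_fun_getElem l (· ^ 2)] at h

section Walks

omit [Fintype V]

variable {G : SimpleGraph V} {σ : V → V → ℂ}

namespace SimpleGraph.Walk

def holonomy (σ : V → V → ℂ) {u v : V} (w : G.Walk u v) : ℂ :=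
  (w.darts.map fun d => σ d.fst d.snd).prod

@[simp]
theorem holonomy_nil {u : V} : (nil : G.Walk u u).holonomy σ = 1 := rfl

@[simp]
theorem holonomy_cons {u v w : V} (h : G.Adj u v) (p : G.Walk v w) :
    (cons h p).holonomy σ = σ u v * p.holonomy σ := by
  simp [holonomy]

@[simp]
theorem holonomy_append {u v w : V} (p : G.Walk u v) (q : G.Walk v w) :
    (p.append q).holonomy σ = p.holonomy σ * q.holonomy σ := by
  simp [holonomy]

theorem holonomy_reverse (hσ : ∀ x y, G.Adj x y → σ y x = (σ x y)⁻¹) {u v : V}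
    (p : G.Walk u v) : p.reverse.holonomy σ = (p.holonomy σ)⁻¹ := by
  induction p with
  | nil => simp
  | cons h p ih => simp [ih, hσ _ _ h, mul_comm]

theorem holonomy_eq_one_or_neg_one (hsign : ∀ x y, G.Adj x y → σ x y = 1 ∨ σ x y = -1)
    {u v : V} (p : G.Walk u v) : p.holonomy σ = 1 ∨ p.holonomy σ = -1 := by
  induction p with
  | nil => simp
  | cons h p ih =>
    rw [holonomy_cons]
    rcases hsign _ _ h with hs | hs <;> rcases ih with hp | hp <;> simp [hs, hp]

theorem norm_sub_holonomy_mul_le (hσ : ∀ x y, G.Adj x y → ‖σ x y‖ = 1) (f : V → ℂ)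
    {u v : V} (p : G.Walk u v) :
    ‖f u - p.holonomy σ * f v‖ ≤
      (p.darts.map fun d => ‖f d.fst - σ d.fst d.snd * f d.snd‖).sum := by
  induction p with
  | nil => simp
  | @cons u v w h p ih =>
    have hdecomp : f u - (σ u v * p.holonomy σ) * f w
        = (f u - σ u v * f v) + σ u v * (f v - p.holonomy σ * f w) := by ring
    calc ‖f u - (cons h p).holonomy σ * f w‖
        ≤ ‖f u - σ u v * f v‖ + ‖f v - p.holonomy σ * f w‖ := by
          rw [holonomy_cons, hdecomp]
          refine (norm_add_le _ _).trans_eq ?_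
          rw [norm_mul, hσ u v h, one_mul]
      _ ≤ _ := by simpa using ih

theorem dist_fst_eq_dist_snd_add_one {u v : V} {p : G.Walk u v} (hp : p.length = G.dist u v)
    {d : G.Dart} (hd : d ∈ p.darts) : G.dist d.fst v = G.dist d.snd v + 1 := by
  induction p with
  | nil => simp at hd
  | cons h p ih =>
    have hp' := length_eq_dist_of_subwalk hp (isSubwalk_cons p h)
    rcases List.mem_cons.1 (darts_cons h p ▸ hd) with rfl | hd
    · simp [← hp, hp']
    · exact ih hp' hd

theorem darts_nodup_of_length_eq_dist {u v : V} {p : G.Walk u v} (hp : p.length = G.dist u v) :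
    p.darts.Nodup :=
  darts_nodup_of_support_nodup (p.isPath_of_length_eq_dist hp).support_nodup

/- Darts of `p.reverse` move away from `x` and those of `q` towards it; the middle dart is either
level or extends one of the two geodesics. -/
theorem darts_nodup_reverse_append_cons {a b x : V} {p : G.Walk a x} {q : G.Walk b x}
    (hp : p.length = G.dist a x) (hq : q.length = G.dist b x) (h : G.Adj a b) :
    (p.reverse.append (cons h q)).darts.Nodup := by
  let Ascends : G.Dart → Prop := fun d => G.dist d.snd x = G.dist d.fst x + 1
  have hsep : ∀ l₁ l₂ : List G.Dart, l₁.Nodup → l₂.Nodup → (∀ d ∈ l₁, Ascends d) →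
      (∀ d ∈ l₂, ¬ Ascends d) → (l₁ ++ l₂).Nodup := fun l₁ l₂ h₁ h₂ hA hN =>
    h₁.append h₂ fun d hd₁ hd₂ => hN d hd₂ (hA d hd₁)
  have hp_asc : ∀ d ∈ p.reverse.darts, Ascends d := fun d hd =>
    dist_fst_eq_dist_snd_add_one hp (mem_darts_reverse.1 hd)
  have hq_desc : ∀ d ∈ q.darts, ¬ Ascends d := fun d hd => by
    have := dist_fst_eq_dist_snd_add_one hq hd
    simp only [Ascends]; omega
  have hpr : p.reverse.darts.Nodup :=
    darts_nodup_of_length_eq_dist (p := p.reverse) (by rw [length_reverse, hp, dist_comm])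
  have hab := dist_le (cons h q)
  have hba := dist_le (cons h.symm p)
  simp only [length_cons] at hab hba
  rw [darts_append, darts_cons]
  by_cases hdown : G.dist a x = G.dist b x + 1
  · have hcons : q.length + 1 = G.dist a x := by omega
    refine hsep _ _ hpr (darts_cons h q ▸ darts_nodup_of_length_eq_dist hcons) hp_asc ?_
    intro d hd
    rcases List.mem_cons.1 hd with rfl | hd
    · simp only [Ascends]; omega
    · exact hq_desc d hd
  by_cases hup : G.dist b x = G.dist a x + 1
  · have hgeod : (p.reverse.concat h).length = G.dist x b := by
      rw [length_concat, length_reverse, hp, dist_comm (u := x), hup]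
    rw [← List.singleton_append, ← List.append_assoc, ← List.concat_eq_append, ← darts_concat]
    refine hsep _ _ (darts_nodup_of_length_eq_dist hgeod) (darts_nodup_of_length_eq_dist hq)
      ?_ hq_desc
    intro d hd
    rw [darts_concat, List.concat_eq_append, List.mem_append, List.mem_singleton] at hd
    rcases hd with hd | rfl
    · exact hp_asc d hd
    · simp only [Ascends]; omega
  · have hlevel : G.dist a x = G.dist b x := by omega
    refine hsep _ _ hpr (List.nodup_cons.2 ⟨fun hd => ?_, darts_nodup_of_length_eq_dist hq⟩)
      hp_asc ?_
    · have := dist_fst_eq_dist_snd_add_one hq hd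
      simp only at this; omega
    · intro d hd
      rcases List.mem_cons.1 hd with rfl | hd
      · simp only [Ascends]; omega
      · exact hq_desc d hd

end SimpleGraph.Walk

end Walks

variable {G : SimpleGraph V} {σ : V → V → ℂ}

namespace SimpleGraph

theorem Connected.exists_closed_walk_holonomy_eq_neg_one (hconn : G.Connected)
    (hσ : ∀ x y, G.Adj x y → σ y x = (σ x y)⁻¹)
    (hsign : ∀ x y, G.Adj x y → σ x y = 1 ∨ σ x y = -1)
    (hunbal : ¬ ∃ τ : V → ℂ, (∀ x, τ x = 1 ∨ τ x = -1) ∧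
        ∀ x y, G.Adj x y → (τ x)⁻¹ * σ x y * τ y = 1) (x : V) :
    ∃ c : G.Walk x x, c.holonomy σ = -1 ∧ c.darts.Nodup ∧ c.length ≤ 2 * G.diam + 1 := by
  choose w hw using fun y => hconn.exists_walk_length_eq_dist y x
  have hτ : ∀ y, (w y).holonomy σ = 1 ∨ (w y).holonomy σ = -1 := fun y =>
    (w y).holonomy_eq_one_or_neg_one hsign
  obtain ⟨a, b, hab, hfrust⟩ : ∃ a b, G.Adj a b ∧
      ((w a).holonomy σ)⁻¹ * σ a b * (w b).holonomy σ ≠ 1 := by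
    by_contra! h
    exact hunbal ⟨_, hτ, h⟩
  let c := (w a).reverse.append (Walk.cons hab (w b))
  have hc : c.holonomy σ = ((w a).holonomy σ)⁻¹ * σ a b * (w b).holonomy σ := by
    simp [c, Walk.holonomy_reverse hσ, mul_assoc]
  have : Nonempty V := ⟨x⟩
  have hdiam : G.ediam ≠ ⊤ := connected_iff_ediam_ne_top.1 hconn
  refine ⟨c, ?_, Walk.darts_nodup_reverse_append_cons (hw a) (hw b) hab, ?_⟩
  · exact (c.holonomy_eq_one_or_neg_one hsign).resolve_left (hc ▸ hfrust)
  · have ha := dist_le_diam hdiam (u := a) (v := x)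
    have hb := dist_le_diam hdiam (u := b) (v := x)
    simp only [c, Walk.length_append, Walk.length_reverse, Walk.length_cons, hw]
    omega

end SimpleGraph

theorem sum_darts_sq_norm_le_two_mul_magEnergy {l : List G.Dart} (hl : l.Nodup)
    (σ : V → V → ℂ) (f : V → ℂ) :
    (l.map fun d => ‖f d.fst - σ d.fst d.snd * f d.snd‖ ^ 2).sum ≤ 2 * magEnergy G σ f := by
  classical
  let g : V × V → ℝ := fun e => if G.Adj e.1 e.2 then ‖f e.1 - σ e.1 e.2 * f e.2‖ ^ 2 else 0
  calc (l.map fun d => ‖f d.fst - σ d.fst d.snd * f d.snd‖ ^ 2).sum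
      = ∑ d ∈ l.toFinset, g d.toProd := by
        rw [List.sum_toFinset _ hl]
        exact congrArg List.sum (List.map_congr_left fun d _ => by simp [g, d.adj])
    _ = ∑ e ∈ l.toFinset.image Dart.toProd, g e :=
        (Finset.sum_image fun _ _ _ _ h => Dart.toProd_injective h).symm
    _ ≤ ∑ e, g e := Finset.sum_le_univ_sum_of_nonneg fun e => by positivity
    _ = 2 * magEnergy G σ f := by
        rw [Fintype.sum_prod_type, magEnergy]
        ring

theorem magEnergy_nonneg (G : SimpleGraph V) (σ : V → V → ℂ) (f : V → ℂ) :
    0 ≤ magEnergy G σ f := by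
  unfold magEnergy
  positivity

theorem two_mul_sq_norm_le_length_mul_magEnergy (hσ : ∀ x y, G.Adj x y → ‖σ x y‖ = 1)
    (f : V → ℂ) {x : V} (c : G.Walk x x) (hc : c.holonomy σ = -1) (hnd : c.darts.Nodup) :
    2 * ‖f x‖ ^ 2 ≤ c.length * magEnergy G σ f := by
  set t := c.darts.map fun d => ‖f d.fst - σ d.fst d.snd * f d.snd‖
  have htel : 2 * ‖f x‖ ≤ t.sum := by
    have := c.norm_sub_holonomy_mul_le hσ f
    rwa [hc, neg_one_mul, sub_neg_eq_add, ← two_mul, norm_mul, Complex.norm_two] at this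
  have hcs : t.sum ^ 2 ≤ c.length * (t.map (· ^ 2)).sum := by
    simpa [t] using List.sq_sum_le_length_mul_sum_sq t
  have henergy : (t.map (· ^ 2)).sum ≤ 2 * magEnergy G σ f := by
    simpa [t, Function.comp_def] using sum_darts_sq_norm_le_two_mul_magEnergy hnd σ f
  nlinarith [norm_nonneg (f x)]

theorem magDenom_le_card_mul_sq_norm {f : V → ℂ} {x : V} (hx : ∀ y, ‖f y‖ ≤ ‖f x‖) :
    magDenom f ≤ Fintype.card V * ‖f x‖ ^ 2 := by
  calc magDenom f ≤ ∑ _y : V, ‖f x‖ ^ 2 :=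
        Finset.sum_le_sum fun y _ => pow_le_pow_left₀ (norm_nonneg _) (hx y) 2
    _ = Fintype.card V * ‖f x‖ ^ 2 := by simp

theorem magDenom_le_of_unbalanced (hconn : G.Connected) (hσ : IsMagPotential G σ)
    (hsign : ∀ x y, G.Adj x y → σ x y = 1 ∨ σ x y = -1)
    (hunbal : ¬ ∃ τ : V → ℂ, (∀ x, τ x = 1 ∨ τ x = -1) ∧
        ∀ x y, G.Adj x y → (τ x)⁻¹ * σ x y * τ y = 1) (f : V → ℂ) :
    magDenom f ≤ ((G.diam : ℝ) + 1) * Fintype.card V * magEnergy G σ f := by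
  have : Nonempty V := hconn.nonempty
  obtain ⟨x, hx⟩ := Finite.exists_max fun y => ‖f y‖
  obtain ⟨c, hc, hnd, hlen⟩ := hconn.exists_closed_walk_holonomy_eq_neg_one hσ.2 hsign hunbal x
  have hkey := two_mul_sq_norm_le_length_mul_magEnergy hσ.1 f c hc hnd
  have hlen' : (c.length : ℝ) ≤ 2 * G.diam + 1 := by exact_mod_cast hlen
  have hE := magEnergy_nonneg G σ f
  have hsq : ‖f x‖ ^ 2 ≤ ((G.diam : ℝ) + 1) * magEnergy G σ f := by nlinarith
  calc magDenom f ≤ Fintype.card V * ‖f x‖ ^ 2 := magDenom_le_card_mul_sq_norm hx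
    _ ≤ Fintype.card V * (((G.diam : ℝ) + 1) * magEnergy G σ f) := by gcongr
    _ = _ := by ring

theorem lambda1_le_magEnergy_div_magDenom {f : V → ℂ} (hf : f ≠ 0) :
    lambda1 G σ ≤ magEnergy G σ f / magDenom f :=
  csInf_le ⟨0, by
    rintro r ⟨g, -, rfl⟩
    exact div_nonneg (magEnergy_nonneg G σ g) (Finset.sum_nonneg fun _ _ => by positivity)⟩
    ⟨f, hf, rfl⟩

theorem le_lambda1_of_magDenom_le [Nonempty V] {C : ℝ} (hC : 0 < C)
    (h : ∀ f, magDenom f ≤ C * magEnergy G σ f) : 1 / C ≤ lambda1 G σ := by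
  refine le_csInf ⟨_, 1, one_ne_zero, rfl⟩ ?_
  rintro r ⟨f, hf, rfl⟩
  have hpos : 0 < magDenom f := by
    obtain ⟨x, hx⟩ := Function.ne_iff.1 hf
    exact Finset.sum_pos' (fun _ _ => by positivity)
      ⟨x, Finset.mem_univ _, pow_pos (norm_pos_iff.2 hx) 2⟩
  rw [div_le_div_iff₀ hC hpos, one_mul, mul_comm]
  exact h f

theorem lambda1_le_two_mul_card [Nonempty V] (hσ : ∀ x y, G.Adj x y → ‖σ x y‖ = 1) :
    lambda1 G σ ≤ 2 * Fintype.card V := by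
  have hn : (0 : ℝ) < Fintype.card V := Nat.cast_pos.2 Fintype.card_pos
  have hterm : ∀ x y, G.Adj x y → ‖(1 : V → ℂ) x - σ x y * (1 : V → ℂ) y‖ ^ 2 ≤ 2 ^ 2 := by
    intro x y hxy
    refine pow_le_pow_left₀ (norm_nonneg _) ?_ 2
    calc _ ≤ ‖(1 : ℂ)‖ + ‖σ x y * 1‖ := norm_sub_le _ _
      _ = 2 := by rw [mul_one, hσ x y hxy, norm_one]; norm_num
  have hE : magEnergy G σ 1 ≤ 2 * Fintype.card V ^ 2 := by
    unfold magEnergy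
    calc _ ≤ (1 / 2 : ℝ) * ∑ _x : V, ∑ _y : V, (2 : ℝ) ^ 2 := by
          gcongr with x _ y _
          split_ifs with hxy
          exacts [hterm x y hxy, by positivity]
      _ = _ := by
          simp only [Finset.sum_const, Finset.card_univ, nsmul_eq_mul]
          ring
  have hD : magDenom (1 : V → ℂ) = Fintype.card V := by simp [magDenom]
  calc lambda1 G σ ≤ magEnergy G σ 1 / magDenom 1 :=
        lambda1_le_magEnergy_div_magDenom one_ne_zero
    _ ≤ 2 * Fintype.card V := by
      rw [hD, div_le_iff₀ hn]
      nlinarith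

theorem lambda1_le_magHeight [Nonempty V] (hσ : IsMagPotential G σ) :
    lambda1 G σ ≤ magHeight G :=
  le_csSup ⟨2 * Fintype.card V, by
    rintro r ⟨τ, hτ, rfl⟩
    exact lambda1_le_two_mul_card hτ.1⟩ ⟨σ, hσ, rfl⟩

theorem unbalanced_signature_lambda1_lower_bound
    (G : SimpleGraph V) (hconn : G.Connected) (σ : V → V → ℂ)
    (hσ : IsMagPotential G σ)
    (hsign : ∀ x y, G.Adj x y → σ x y = 1 ∨ σ x y = -1)
    (hunbal : ¬ ∃ τ : V → ℂ, (∀ x, τ x = 1 ∨ τ x = -1) ∧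
        ∀ x y, G.Adj x y → (τ x)⁻¹ * σ x y * τ y = 1) :
    (1 : ℝ) / (((G.diam : ℝ) + 1) * Fintype.card V) ≤ lambda1 G σ ∧
    (1 : ℝ) / (((G.diam : ℝ) + 1) * Fintype.card V) ≤ magHeight G := by
  have : Nonempty V := hconn.nonempty
  have hbound := le_lambda1_of_magDenom_le (by positivity)
    (magDenom_le_of_unbalanced hconn hσ hsign hunbal)
  exact ⟨hbound, hbound.trans (lambda1_le_magHeight hσ)⟩
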